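/- There is no positive semidefinite 8×8 matrix C satisfying simultaneously: (i) Tr₁₂C = 1₂ (trace preservation), and (ii) for every equatorial state ρ, the map B(ρ) = Tr₃[(1⊗ρᵀ)C] satisfies Tr₁B(ρ) = Tr₂B(ρ) = ρ, and (iii) C has the symmetric block form of Eq. (12) with the classical-consistency constraints c₃ = 1−c₂, c₅ = c₄−1/2, c₆ = 2−c₁−4c₄. (No physical phase-covariant broadcasting map exists within this family.) -/

import Mathlib

open Matrix Complex ComplexOrder

noncomputable section

/-- The general Choi operator (Eq. (12)) of a map satisfying phase covariance,
flip covariance and permutation invariance. -/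
noncomputable def Cgen (c1 c2 c3 c4 c5 c6 : ℂ) : Matrix (Fin 8) (Fin 8) ℂ :=
  !![c1, 0, 0, c2, 0, c2, 0, 0;
     0, c6, 0, 0, 0, 0, 0, 0;
     0, 0, c4+c5, 0, c4-c5, 0, 0, c3;
     c3, 0, 0, c4+c5, 0, c4-c5, 0, 0;
     0, 0, c4-c5, 0, c4+c5, 0, 0, c3;
     c3, 0, 0, c4-c5, 0, c4+c5, 0, 0;
     0, 0, 0, 0, 0, 0, c6, 0;
     0, 0, c2, 0, c2, 0, 0, c1]

def idx (m : Fin 4) (k : Fin 2) : Fin 8 :=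
  ⟨2 * m.val + k.val, by have := m.isLt; have := k.isLt; omega⟩

noncomputable def ptrace12 (C : Matrix (Fin 8) (Fin 8) ℂ) : Matrix (Fin 2) (Fin 2) ℂ :=
  Matrix.of fun k l => ∑ m : Fin 4, C (idx m k) (idx m l)

def pr (a b : Fin 2) : Fin 4 :=
  ⟨2 * a.val + b.val, by have := a.isLt; have := b.isLt; omega⟩

/-- The map with Choi operator `C` (third tensor factor = input):
`B(ρ) = Tr₃[(1 ⊗ ρᵀ) C]`, in components. -/
noncomputable def Bof (C : Matrix (Fin 8) (Fin 8) ℂ) (ρ : Matrix (Fin 2) (Fin 2) ℂ) :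
    Matrix (Fin 4) (Fin 4) ℂ :=
  Matrix.of fun m n => ∑ k : Fin 2, ∑ k' : Fin 2, ρ k' k * C (idx m k') (idx n k)

/-- Partial trace over the first output qubit. -/
noncomputable def tr1 (M : Matrix (Fin 4) (Fin 4) ℂ) : Matrix (Fin 2) (Fin 2) ℂ :=
  Matrix.of fun b b' => ∑ a : Fin 2, M (pr a b) (pr a b')

/-- Partial trace over the second output qubit. -/
noncomputable def tr2 (M : Matrix (Fin 4) (Fin 4) ℂ) : Matrix (Fin 2) (Fin 2) ℂ :=
  Matrix.of fun a a' => ∑ b : Fin 2, M (pr a b) (pr a' b)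

def sx : Matrix (Fin 2) (Fin 2) ℂ := !![0, 1; 1, 0]
def sy : Matrix (Fin 2) (Fin 2) ℂ := !![0, -Complex.I; Complex.I, 0]

noncomputable def eqstate (r φ : ℝ) : Matrix (Fin 2) (Fin 2) ℂ :=
  (1/2 : ℂ) • ((1 : Matrix (Fin 2) (Fin 2) ℂ)
    + ((r * Real.cos φ : ℝ) : ℂ) • sx + ((r * Real.sin φ : ℝ) : ℂ) • sy)

theorem aux_cv5 {α : Type*} (a0 a1 a2 a3 a4 a5 a6 a7 : α) :
    ![a0,a1,a2,a3,a4,a5,a6,a7] (5:Fin 8) = a5 := rfl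
theorem aux_cv6 {α : Type*} (a0 a1 a2 a3 a4 a5 a6 a7 : α) :
    ![a0,a1,a2,a3,a4,a5,a6,a7] (6:Fin 8) = a6 := rfl
theorem aux_cv7 {α : Type*} (a0 a1 a2 a3 a4 a5 a6 a7 : α) :
    ![a0,a1,a2,a3,a4,a5,a6,a7] (7:Fin 8) = a7 := rfl

/-- No positive semidefinite Choi operator of the symmetric block form, satisfying the
classical-consistency constraints, is trace-preserving and broadcasts all equatorial
states: no physical phase-covariant broadcasting map exists within this family. -/
theorem no_physical_phase_covariant_broadcasting :
    ¬ ∃ (c1 c4 : ℝ) (c2 c3 c5 c6 : ℂ),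
      c3 = 1 - c2 ∧ c5 = (c4 : ℂ) - 1/2 ∧ c6 = 2 - (c1 : ℂ) - 4 * (c4 : ℂ) ∧
      (Cgen (c1 : ℂ) c2 c3 (c4 : ℂ) c5 c6).PosSemidef ∧
      ptrace12 (Cgen (c1 : ℂ) c2 c3 (c4 : ℂ) c5 c6) = 1 ∧
      (∀ r φ : ℝ, 0 ≤ r → r ≤ 1 →
        tr1 (Bof (Cgen (c1 : ℂ) c2 c3 (c4 : ℂ) c5 c6) (eqstate r φ)) = eqstate r φ ∧
        tr2 (Bof (Cgen (c1 : ℂ) c2 c3 (c4 : ℂ) c5 c6) (eqstate r φ)) = eqstate r φ) := by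
  rintro ⟨c1, c4, c2, c3, c5, c6, h3, h5, h6, hpsd, -, -⟩
  subst h3 h5 h6
  -- The quadratic form of C on vectors supported on coordinates 0 and 3:
  -- the off-diagonal c₂-terms cancel since c₂ + c₃ = 1.
  have key : ∀ t : ℝ, (0:ℝ) ≤ c1 * t^2 - t + 2*c4 - 1/2 := by
    intro t
    have h := hpsd.dotProduct_mulVec_nonneg ![(t:ℂ), 0, 0, -1, 0, 0, 0, 0]
    simp [Matrix.mulVec, dotProduct, Fin.sum_univ_eight, Cgen,
      aux_cv5, aux_cv6, aux_cv7] at h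
    have hE : (t:ℂ) * ((c1:ℂ) * t + -c2) + ((c4:ℂ) + ((c4:ℂ) - 2⁻¹) + -((1 - c2) * t))
        = ((c1 * t^2 - t + 2*c4 - 1/2 : ℝ) : ℂ) := by push_cast; ring
    rw [hE] at h
    exact_mod_cast h
  -- Positivity of the diagonal entry c₆ = 2 − c₁ − 4c₄.
  have h6 : (0:ℝ) ≤ 2 - c1 - 4*c4 := by
    have h := hpsd.dotProduct_mulVec_nonneg ![0, 1, 0, 0, 0, 0, 0, 0]
    simp [Matrix.mulVec, dotProduct, Fin.sum_univ_eight, Cgen,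
      aux_cv5, aux_cv6, aux_cv7] at h
    have h' := sub_nonneg.mpr h
    have hE : (2:ℂ) - (c1:ℂ) - 4*(c4:ℂ) = ((2 - c1 - 4*c4 : ℝ) : ℂ) := by push_cast; ring
    rw [hE] at h'
    exact_mod_cast h'
  have h1 := key (1/2)
  have h2 := key 1
  norm_num at h1 h2
  linarith

end
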